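/- arXiv:1911.00487 — 3 statements merged into one kernel-verified Lean document; each statement's English description precedes it below -/
import Mathlib

section
/- Let A, B, C be three families of subsets of a ground set [n] such that each family consists of at least seven pairwise disjoint non-empty sets. Then there exist A ∈ A, B ∈ B, C ∈ C such that A∖(B∪C), B∖(A∪C), and C∖(A∪B) are all non-empty. -/
/-!
Pick a point `r X ∈ X` in every set of the three families, and call two sets `X`, `Y` from
different families in conflict when `r X ∈ Y` or `r Y ∈ X`. Since a family is pairwise
disjoint, a point lies in at most one of its sets, so at most `a + b` pairs from families of
sizes `a` and `b` conflict. A triple without conflicts is what we want, and the triples with a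
conflict number at most `(a + b) c + (a + c) b + (b + c) a`, which is less than `a b c` once
`a, b, c ≥ 7`.
-/

open Finset

section

variable {α : Type*} [DecidableEq α]

theorem card_filter_apply_mem_le {ι : Type*} (s : Finset ι) {𝒴 : Finset (Finset α)}
    (h𝒴 : (𝒴 : Set (Finset α)).Pairwise Disjoint) (f : ι → α) :
    #{p ∈ s ×ˢ 𝒴 | f p.1 ∈ p.2} ≤ #s := by
  refine card_le_card_of_injOn Prod.fst (fun p hp ↦ (mem_product.1 (mem_filter.1 hp).1).1) ?_
  rintro ⟨i, Y⟩ hY ⟨j, Y'⟩ hY' (rfl : i = j)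
  simp only [coe_filter, mem_product, Set.mem_ofPred_eq] at hY hY'
  exact Prod.ext rfl <| h𝒴.eq hY.1.2 hY'.1.2 <| not_disjoint_iff.2 ⟨f i, hY.2, hY'.2⟩

theorem card_filter_rep_mem_or_le {𝒳 𝒴 : Finset (Finset α)}
    (h𝒳 : (𝒳 : Set (Finset α)).Pairwise Disjoint) (h𝒴 : (𝒴 : Set (Finset α)).Pairwise Disjoint)
    (r : Finset α → α) :
    #{p ∈ 𝒳 ×ˢ 𝒴 | r p.1 ∈ p.2 ∨ r p.2 ∈ p.1} ≤ #𝒳 + #𝒴 := by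
  rw [filter_or]
  refine (card_union_le _ _).trans (add_le_add (card_filter_apply_mem_le 𝒳 h𝒴 r) ?_)
  have hswap : #{p ∈ 𝒳 ×ˢ 𝒴 | r p.2 ∈ p.1} ≤ #{q ∈ 𝒴 ×ˢ 𝒳 | r q.1 ∈ q.2} :=
    card_le_card_of_injOn Prod.swap (fun p hp ↦ by simp_all) Prod.swap_injective.injOn
  exact hswap.trans (card_filter_apply_mem_le 𝒴 h𝒳 r)

end

theorem card_filter_triple_le {α β γ : Type*} (s : Finset α) (t : Finset β) (u : Finset γ)
    (P : α → β → Prop) (Q : α → γ → Prop) (R : β → γ → Prop)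
    [∀ a b, Decidable (P a b)] [∀ a c, Decidable (Q a c)] [∀ b c, Decidable (R b c)] :
    #{x ∈ s ×ˢ t ×ˢ u | P x.1 x.2.1 ∨ Q x.1 x.2.2 ∨ R x.2.1 x.2.2} ≤
      #{p ∈ s ×ˢ t | P p.1 p.2} * #u + #{p ∈ s ×ˢ u | Q p.1 p.2} * #t +
        #{p ∈ t ×ˢ u | R p.1 p.2} * #s := by
  have hP : #{x ∈ s ×ˢ t ×ˢ u | P x.1 x.2.1} ≤ #{p ∈ s ×ˢ t | P p.1 p.2} * #u := by
    rw [← card_product]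
    refine card_le_card_of_injOn (fun x ↦ ((x.1, x.2.1), x.2.2)) (fun x hx ↦ by simp_all) ?_
    intro x _ y _ h
    simp_all [Prod.ext_iff]
  have hQ : #{x ∈ s ×ˢ t ×ˢ u | Q x.1 x.2.2} ≤ #{p ∈ s ×ˢ u | Q p.1 p.2} * #t := by
    rw [← card_product]
    refine card_le_card_of_injOn (fun x ↦ ((x.1, x.2.2), x.2.1)) (fun x hx ↦ by simp_all) ?_
    intro x _ y _ h
    simp_all [Prod.ext_iff]
  have hR : #{x ∈ s ×ˢ t ×ˢ u | R x.2.1 x.2.2} ≤ #{p ∈ t ×ˢ u | R p.1 p.2} * #s := by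
    rw [← card_product]
    refine card_le_card_of_injOn (fun x ↦ (x.2, x.1)) (fun x hx ↦ by simp_all) ?_
    intro x _ y _ h
    simp_all [Prod.ext_iff]
  classical
  rw [filter_or, filter_or]
  grw [card_union_le, card_union_le, hP, hQ, hR, add_assoc]

theorem pair_sums_mul_lt_mul_mul {a b c : ℕ} (ha : 7 ≤ a) (hb : 7 ≤ b) (hc : 7 ≤ c) :
    (a + b) * c + (a + c) * b + (b + c) * a < a * (b * c) := by
  nlinarith [Nat.mul_le_mul_right (b * c) ha, Nat.mul_le_mul_right (a * c) hb,
    Nat.mul_le_mul_right (a * b) hc, Nat.mul_le_mul hb hc]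

/-- Given three families on `Fin n`, each consisting of at least seven pairwise disjoint
non-empty sets, one can pick one set from each family so that each picked set has a point
outside the union of the other two. -/
theorem stmt_4 (n : ℕ) (𝒜 ℬ 𝒞 : Finset (Finset (Fin n)))
    (hA : 7 ≤ 𝒜.card) (hB : 7 ≤ ℬ.card) (hC : 7 ≤ 𝒞.card)
    (hAne : ∀ A ∈ 𝒜, A.Nonempty) (hBne : ∀ B ∈ ℬ, B.Nonempty) (hCne : ∀ C ∈ 𝒞, C.Nonempty)
    (hAdisj : ∀ A₁ ∈ 𝒜, ∀ A₂ ∈ 𝒜, A₁ ≠ A₂ → Disjoint A₁ A₂)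
    (hBdisj : ∀ B₁ ∈ ℬ, ∀ B₂ ∈ ℬ, B₁ ≠ B₂ → Disjoint B₁ B₂)
    (hCdisj : ∀ C₁ ∈ 𝒞, ∀ C₂ ∈ 𝒞, C₁ ≠ C₂ → Disjoint C₁ C₂) :
    ∃ A ∈ 𝒜, ∃ B ∈ ℬ, ∃ C ∈ 𝒞,
      (A \ (B ∪ C)).Nonempty ∧ (B \ (A ∪ C)).Nonempty ∧ (C \ (A ∪ B)).Nonempty := by
  classical
  have : Nonempty (Fin n) := by
    obtain ⟨A, hA𝒜⟩ := card_pos.1 (by omega : 0 < #𝒜)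
    obtain ⟨x, -⟩ := hAne A hA𝒜
    exact ⟨x⟩
  let r : Finset (Fin n) → Fin n := fun X ↦ Classical.epsilon (· ∈ X)
  have hr : ∀ X : Finset (Fin n), X.Nonempty → r X ∈ X := fun _ ↦ Classical.epsilon_spec
  have h𝒜 : (𝒜 : Set (Finset (Fin n))).Pairwise Disjoint := fun _ h₁ _ h₂ ↦ hAdisj _ h₁ _ h₂
  have hℬ : (ℬ : Set (Finset (Fin n))).Pairwise Disjoint := fun _ h₁ _ h₂ ↦ hBdisj _ h₁ _ h₂
  have h𝒞 : (𝒞 : Set (Finset (Fin n))).Pairwise Disjoint := fun _ h₁ _ h₂ ↦ hCdisj _ h₁ _ h₂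
  have hconflicts := card_filter_triple_le 𝒜 ℬ 𝒞 (fun A B ↦ r A ∈ B ∨ r B ∈ A)
    (fun A C ↦ r A ∈ C ∨ r C ∈ A) (fun B C ↦ r B ∈ C ∨ r C ∈ B)
  grw [card_filter_rep_mem_or_le h𝒜 hℬ, card_filter_rep_mem_or_le h𝒜 h𝒞,
    card_filter_rep_mem_or_le hℬ h𝒞] at hconflicts
  obtain ⟨⟨A, B, C⟩, hABC, hfree⟩ : ∃ x ∈ 𝒜 ×ˢ ℬ ×ˢ 𝒞, ¬((r x.1 ∈ x.2.1 ∨ r x.2.1 ∈ x.1) ∨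
      (r x.1 ∈ x.2.2 ∨ r x.2.2 ∈ x.1) ∨ (r x.2.1 ∈ x.2.2 ∨ r x.2.2 ∈ x.2.1)) := by
    by_contra! h
    rw [card_filter_eq_iff.2 h, card_product, card_product] at hconflicts
    exact (hconflicts.trans_lt (pair_sums_mul_lt_mul_mul hA hB hC)).false
  obtain ⟨hA𝒜, hBℬ, hC𝒞⟩ : A ∈ 𝒜 ∧ B ∈ ℬ ∧ C ∈ 𝒞 := by simpa only [mem_product] using hABC
  simp only [not_or] at hfree
  obtain ⟨⟨hAB, hBA⟩, ⟨hAC, hCA⟩, ⟨hBC, hCB⟩⟩ := hfree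
  exact ⟨A, hA𝒜, B, hBℬ, C, hC𝒞, ⟨r A, mem_sdiff.2 ⟨hr A (hAne A hA𝒜), notMem_union.2 ⟨hAB, hAC⟩⟩⟩,
    ⟨r B, mem_sdiff.2 ⟨hr B (hBne B hBℬ), notMem_union.2 ⟨hBA, hBC⟩⟩⟩,
    ⟨r C, mem_sdiff.2 ⟨hr C (hCne C hC𝒞), notMem_union.2 ⟨hCA, hCB⟩⟩⟩⟩
end

section
/- Let F₁, F₂ ⊆ [n] form a crossing pair with regions A = F₁∩F₂, B = F₁∖F₂, C = F₂∖F₁, D = [n]∖(F₁∪F₂), all non-empty. If a family F containing F₁, F₂ has no three sets whose Venn diagram has at least five of the seven inner regions non-empty, then every other set F₃ ∈ F properly splits at most one of the four regions A, B, C, D, where F₃ properly splits T if both F₃∩T and T∖F₃ are non-empty. -/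
/-!
Each of the non-empty regions `A`, `B`, `C` of `F₁, F₂` meets `F₃` or its complement, so it
contributes at least one non-empty inner region of the Venn diagram of `F₁, F₂, F₃`, and two
when `F₃` properly splits it; `D` contributes the inner region `D ∩ F₃`, which is non-empty when
`F₃` splits `D`. Hence `F₁, F₂, F₃` have at least `3 + s` non-empty inner regions, where `s` is
the number of regions that `F₃` properly splits, and the hypothesis forces `s ≤ 1`.
-/

/-- The Boolean region of the 3-Venn diagram of `A, B, C` with sign pattern `p`. -/
def vennRegion {n : ℕ} (A B C : Finset (Fin n)) (p : Bool × Bool × Bool) : Finset (Fin n) :=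
  (if p.1 then A else Aᶜ) ∩ (if p.2.1 then B else Bᶜ) ∩ (if p.2.2 then C else Cᶜ)

/-- The number of non-empty regions among the seven inner regions (all Boolean regions
except the outermost one) of the Venn diagram of `A, B, C`. -/
def innerCount {n : ℕ} (A B C : Finset (Fin n)) : ℕ :=
  (Finset.univ.filter (fun p : Bool × Bool × Bool =>
    p ≠ (false, false, false) ∧ (vennRegion A B C p).Nonempty)).card

namespace Finset

variable {α : Type*} [DecidableEq α]

def ProperlySplits (S T : Finset α) : Prop := (S ∩ T).Nonempty ∧ (T \ S).Nonempty

instance (S T : Finset α) : Decidable (ProperlySplits S T) :=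
  inferInstanceAs (Decidable (_ ∧ _))

def pieceCount (S T : Finset α) : ℕ :=
  (if (T ∩ S).Nonempty then 1 else 0) + if (T \ S).Nonempty then 1 else 0

theorem pieceCount_eq_one_add {S T : Finset α} (hT : T.Nonempty) :
    pieceCount S T = 1 + if ProperlySplits S T then 1 else 0 := by
  have hcover : (T ∩ S).Nonempty ∨ (T \ S).Nonempty := by
    obtain ⟨x, hx⟩ := hT
    by_cases hxS : x ∈ S
    · exact .inl ⟨x, mem_inter.2 ⟨hx, hxS⟩⟩
    · exact .inr ⟨x, mem_sdiff.2 ⟨hx, hxS⟩⟩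
  have hsplit : ProperlySplits S T ↔ (T ∩ S).Nonempty ∧ (T \ S).Nonempty := by
    rw [ProperlySplits, inter_comm]
  simp only [pieceCount, hsplit]
  split_ifs <;> tauto

end Finset

open Finset

theorem innerCount_eq_pieceCount_add {n : ℕ} (X Y Z : Finset (Fin n)) :
    innerCount X Y Z = pieceCount Z (X ∩ Y) + pieceCount Z (X \ Y) + pieceCount Z (Y \ X) +
      if (Z ∩ (X ∪ Y)ᶜ).Nonempty then 1 else 0 := by
  rw [innerCount, card_filter]
  simp only [Fintype.sum_prod_type, Fintype.sum_bool, vennRegion, pieceCount, ne_eq,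
    Prod.mk.injEq, Bool.true_eq_false, false_and, and_false, not_false_eq_true, true_and,
    not_true, and_true, reduceCtorEq, if_true, if_false, sdiff_eq_inter_compl, compl_union]
  rw [inter_comm Y Xᶜ, inter_comm Z]
  omega

theorem three_add_countP_properlySplits_le_innerCount {n : ℕ} {X Y Z : Finset (Fin n)}
    (hXY : (X ∩ Y).Nonempty) (hX : (X \ Y).Nonempty) (hY : (Y \ X).Nonempty) :
    3 + [X ∩ Y, X \ Y, Y \ X, (X ∪ Y)ᶜ].countP (fun T => decide (ProperlySplits Z T)) ≤
      innerCount X Y Z := by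
  have hD : (if ProperlySplits Z (X ∪ Y)ᶜ then 1 else 0) ≤
      if (Z ∩ (X ∪ Y)ᶜ).Nonempty then 1 else 0 := by
    split_ifs with hs hz <;> first | exact absurd hs.1 hz | omega
  simp only [List.countP_cons, List.countP_nil, decide_eq_true_eq]
  rw [innerCount_eq_pieceCount_add, pieceCount_eq_one_add hXY, pieceCount_eq_one_add hX,
    pieceCount_eq_one_add hY]
  omega

theorem stmt_6_general (n : ℕ) (F : Finset (Finset (Fin n))) (F₁ F₂ : Finset (Fin n))
    (h₁ : F₁ ∈ F) (h₂ : F₂ ∈ F)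
    (A B C D : Finset (Fin n))
    (hA : A = F₁ ∩ F₂) (hB : B = F₁ \ F₂) (hC : C = F₂ \ F₁) (hD : D = (F₁ ∪ F₂)ᶜ)
    (hAne : A.Nonempty) (hBne : B.Nonempty) (hCne : C.Nonempty)
    (hno : ¬ ∃ X ∈ F, ∃ Y ∈ F, ∃ Z ∈ F, 5 ≤ innerCount X Y Z) :
    ∀ F₃ ∈ F, F₃ ≠ F₁ → F₃ ≠ F₂ →
      (([A, B, C, D] : List (Finset (Fin n))).countP
        (fun T => decide ((F₃ ∩ T).Nonempty ∧ (T \ F₃).Nonempty))) ≤ 1 := by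
  intro F₃ hF₃ _ _
  show List.countP (fun T => decide (ProperlySplits F₃ T)) _ ≤ 1
  subst hA hB hC hD
  have hle := three_add_countP_properlySplits_le_innerCount (Z := F₃) hAne hBne hCne
  have hlt : innerCount F₁ F₂ F₃ < 5 := not_le.1 fun h => hno ⟨F₁, h₁, F₂, h₂, F₃, hF₃, h⟩
  omega

/-- If `F₁, F₂ ∈ F` form a crossing pair with regions `A, B, C, D` all non-empty, and `F`
contains no three sets with at least five of the seven inner Venn regions non-empty, then
any other set of `F` properly splits at most one of the four regions. -/
theorem stmt_6 (n : ℕ) (F : Finset (Finset (Fin n))) (F₁ F₂ : Finset (Fin n))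
    (h₁ : F₁ ∈ F) (h₂ : F₂ ∈ F)
    (A B C D : Finset (Fin n))
    (hA : A = F₁ ∩ F₂) (hB : B = F₁ \ F₂) (hC : C = F₂ \ F₁) (hD : D = (F₁ ∪ F₂)ᶜ)
    (hAne : A.Nonempty) (hBne : B.Nonempty) (hCne : C.Nonempty) (hDne : D.Nonempty)
    (hno : ¬ ∃ X ∈ F, ∃ Y ∈ F, ∃ Z ∈ F, 5 ≤ innerCount X Y Z) :
    ∀ F₃ ∈ F, F₃ ≠ F₁ → F₃ ≠ F₂ →
      (([A, B, C, D] : List (Finset (Fin n))).countP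
        (fun T => decide ((F₃ ∩ T).Nonempty ∧ (T \ F₃).Nonempty))) ≤ 1 :=
  stmt_6_general n F F₁ F₂ h₁ h₂ A B C D hA hB hC hD hAne hBne hCne hno
end

section
/- Suppose F is a family of subsets of [n], x ∈ [n], and G ⊆ F is a family of sets not containing x such that for every G ∈ G both G and G∪{x} lie in F. If G contains sets A, B, C with at least s of the seven inner Venn regions non-empty and with at least one inner region empty, then F contains three sets with at least s+1 of the seven inner Venn regions non-empty. -/
/-!
Each point `y` lies in exactly one Venn region of `A, B, C`, the one whose sign pattern records
whether `y` belongs to `A`, `B`, `C`. Adding the free element `x` to exactly those of `A, B, C`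
that are selected by an empty inner region `p` moves `x` from the outer region into `p` and
leaves every other point where it was, so one more inner region becomes non-empty.
-/

namespace Finset

variable {n : ℕ}

def vennPattern (A B C : Finset (Fin n)) (y : Fin n) : Bool × Bool × Bool :=
  (decide (y ∈ A), decide (y ∈ B), decide (y ∈ C))

theorem mem_vennRegion_iff {A B C : Finset (Fin n)} {p : Bool × Bool × Bool} {y : Fin n} :
    y ∈ vennRegion A B C p ↔ vennPattern A B C y = p := by
  obtain ⟨a, b, c⟩ := p
  cases a <;> cases b <;> cases c <;> simp [vennRegion, vennPattern]

theorem innerCount_lt_of_eq_off {A B C X Y Z : Finset (Fin n)} {x : Fin n}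
    (hoff : ∀ y, y ≠ x → vennPattern X Y Z y = vennPattern A B C y)
    (hx : vennPattern A B C x = (false, false, false))
    (hinner : vennPattern X Y Z x ≠ (false, false, false))
    (hempty : vennRegion A B C (vennPattern X Y Z x) = ∅) :
    innerCount A B C < innerCount X Y Z := by
  apply card_lt_card
  rw [ssubset_iff_of_subset]
  · refine ⟨vennPattern X Y Z x, ?_, ?_⟩
    · simpa using ⟨hinner, x, mem_vennRegion_iff.2 rfl⟩
    · simp [hempty]
  · intro q hq
    simp only [mem_filter, mem_univ, true_and] at hq ⊢
    obtain ⟨hq, y, hy⟩ := hq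
    rw [mem_vennRegion_iff] at hy
    have hyx : y ≠ x := by rintro rfl; exact hq (hy ▸ hx)
    exact ⟨hq, y, mem_vennRegion_iff.2 (hoff y hyx ▸ hy)⟩

theorem decide_mem_ite_insert {A : Finset (Fin n)} {x y : Fin n} (hx : x ∉ A) (b : Bool) :
    decide (y ∈ if b then insert x A else A) = if y = x then b else decide (y ∈ A) := by
  by_cases hy : y = x
  · subst hy; cases b <;> simp [hx]
  · cases b <;> simp [hy]

theorem vennPattern_ite_insert {A B C : Finset (Fin n)} {x : Fin n}
    (hA : x ∉ A) (hB : x ∉ B) (hC : x ∉ C) (a b c : Bool) (y : Fin n) :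
    vennPattern (if a then insert x A else A) (if b then insert x B else B)
        (if c then insert x C else C) y =
      if y = x then (a, b, c) else vennPattern A B C y := by
  simp only [vennPattern, decide_mem_ite_insert hA, decide_mem_ite_insert hB,
    decide_mem_ite_insert hC]
  split_ifs <;> rfl

end Finset

open Finset in
/-- Boosting with a free element: if `G` consists of sets avoiding `x` with both `G` and
`G ∪ {x}` in `F`, and `G` contains three sets with at least `s` of the seven inner Venn
regions non-empty and some inner region empty, then `F` contains three sets with at least
`s + 1` of the seven inner regions non-empty. -/
theorem stmt_18 (n : ℕ) (F G : Finset (Finset (Fin n))) (x : Fin n) (s : ℕ)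
    (hG : ∀ S ∈ G, x ∉ S ∧ S ∈ F ∧ insert x S ∈ F)
    (h : ∃ A ∈ G, ∃ B ∈ G, ∃ C ∈ G, s ≤ innerCount A B C ∧
      ∃ p : Bool × Bool × Bool, p ≠ (false, false, false) ∧ vennRegion A B C p = ∅) :
    ∃ X ∈ F, ∃ Y ∈ F, ∃ Z ∈ F, s + 1 ≤ innerCount X Y Z := by
  obtain ⟨A, hA, B, hB, C, hC, hs, ⟨a, b, c⟩, hp, hempty⟩ := h
  have hmem : ∀ S ∈ G, ∀ e : Bool, (if e then insert x S else S) ∈ F := fun S hS e => by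
    cases e <;> simp [hG S hS]
  have hpattern := vennPattern_ite_insert (hG A hA).1 (hG B hB).1 (hG C hC).1 a b c
  refine ⟨_, hmem A hA a, _, hmem B hB b, _, hmem C hC c, ?_⟩
  have hlt : innerCount A B C < _ := innerCount_lt_of_eq_off
    (fun y hy => by rw [hpattern, if_neg hy])
    (by simp [vennPattern, (hG A hA).1, (hG B hB).1, (hG C hC).1])
    (by rwa [hpattern, if_pos rfl]) (by rwa [hpattern, if_pos rfl])
  omega
end
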